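/- arXiv:1903.04033 — 2 statements merged into one kernel-verified Lean document; each statement's English description precedes it below -/
import Mathlib

section
/- Let p = A^36 − A^32 + A^28 − A^24 − A^12 + A^8 − A^4 + 1, d₁ = (A^24 + A^16 + A^8 + 1) − (A^20 + A^12 + A^8 + 2 − A^(−4) + A^(−8) − A^(−12)), and d₂ = (−A^26 − A^18 + A^14 − A^10 + A^6 − A^2) − (−A^18 − A^10 − A^2 + A^(−10) + A^(−18) − A^(−22)), all elements of ℤ[A,A⁻¹]. Then for every q ∈ ℤ[A,A⁻¹], q divides p if and only if q divides both d₁ and d₂; that is, p is a greatest common divisor of d₁ and d₂ in ℤ[A,A⁻¹]. -/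
open LaurentPolynomial

private lemma p_eq1 :
    ((T 24 + T 16 + T 8 + 1 : LaurentPolynomial ℤ)
      - (T 20 + T 12 + T 8 + 2 - T (-4) + T (-8) - T (-12)))
    = T (-12) * (T 36 - T 32 + T 28 - T 24 - T 12 + T 8 - T 4 + 1) := by
  simp only [mul_add, mul_sub, mul_one, ← T_add]
  norm_num
  ring

private lemma p_eq2 :
    ((-T 26 - T 18 + T 14 - T 10 + T 6 - T 2 : LaurentPolynomial ℤ)
      - (-T 18 - T 10 - T 2 + T (-10) + T (-18) - T (-22)))
    = (T (-22) - T (-14) - T (-10)) * (T 36 - T 32 + T 28 - T 24 - T 12 + T 8 - T 4 + 1) := by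
  simp only [mul_add, mul_sub, sub_mul, mul_one, ← T_add]
  norm_num
  ring

private lemma p_eq3 :
    (T 36 - T 32 + T 28 - T 24 - T 12 + T 8 - T 4 + 1 : LaurentPolynomial ℤ)
    = (T 32 + T 28 + T 24) * (T (-12) * (T 36 - T 32 + T 28 - T 24 - T 12 + T 8 - T 4 + 1))
      + (T 30 + T 22) * ((T (-22) - T (-14) - T (-10))
          * (T 36 - T 32 + T 28 - T 24 - T 12 + T 8 - T 4 + 1)) := by
  simp only [mul_add, mul_sub, sub_mul, add_mul, mul_one, ← T_add]
  norm_num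
  ring

/-- `A³⁶ − A³² + A²⁸ − A²⁴ − A¹² + A⁸ − A⁴ + 1` is a greatest common divisor in
ℤ[A,A⁻¹] of the two nontrivial differences of closure polynomials arising in
the double-Δ-move theorem: an element `q` divides it iff `q` divides both
differences. Here `T n` denotes `A^n`. -/
theorem double_delta_gcd :
    ∀ q : LaurentPolynomial ℤ,
      q ∣ (T 36 - T 32 + T 28 - T 24 - T 12 + T 8 - T 4 + 1 : LaurentPolynomial ℤ) ↔
        (q ∣ ((T 24 + T 16 + T 8 + 1 : LaurentPolynomial ℤ)
              - (T 20 + T 12 + T 8 + 2 - T (-4) + T (-8) - T (-12))) ∧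
         q ∣ ((-T 26 - T 18 + T 14 - T 10 + T 6 - T 2 : LaurentPolynomial ℤ)
              - (-T 18 - T 10 - T 2 + T (-10) + T (-18) - T (-22)))) := by
  intro q
  constructor
  · intro h
    exact ⟨p_eq1 ▸ h.mul_left _, p_eq2 ▸ h.mul_left _⟩
  · rintro ⟨h1, h2⟩
    rw [p_eq1] at h1
    rw [p_eq2] at h2
    exact p_eq3 ▸ (h1.mul_left _).add (h2.mul_left _)
end

section
/- Exactly 15 noncrossing perfect matchings of the set {1, 2, …, 12} contain no block of the form {2i−1, 2i} for any i ∈ {1, …, 6} (i.e., none of the blocks {1,2}, {3,4}, {5,6}, {7,8}, {9,10}, {11,12}). -/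
/-- A perfect matching of `{1,…,2n}`: a collection of pairwise disjoint
two-element blocks contained in `{1,…,2n}` covering every point. -/
def IsPerfectMatching (n : ℕ) (m : Finset (Finset ℕ)) : Prop :=
  (∀ b ∈ m, b.card = 2) ∧
  (∀ b ∈ m, b ⊆ Finset.Icc 1 (2 * n)) ∧
  (∀ b₁ ∈ m, ∀ b₂ ∈ m, b₁ ≠ b₂ → Disjoint b₁ b₂) ∧
  (∀ i ∈ Finset.Icc 1 (2 * n), ∃ b ∈ m, i ∈ b)

/-- Two blocks `{a,b}` (`a<b`) and `{c,d}` (`c<d`) cross when `a<c<b<d`. -/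
def Crosses (b₁ b₂ : Finset ℕ) : Prop :=
  ∃ a ∈ b₁, ∃ b ∈ b₁, ∃ c ∈ b₂, ∃ d ∈ b₂, a < c ∧ c < b ∧ b < d

/-- A matching is noncrossing if no two of its blocks cross. -/
def Noncrossing (m : Finset (Finset ℕ)) : Prop :=
  ∀ b₁ ∈ m, ∀ b₂ ∈ m, ¬ Crosses b₁ b₂

/-!
Every perfect matching of `{1,…,2n}` is the set of blocks of one of the `(2n-1)!!` pairings of
the list `[1, …, 2n]` that always match the smallest unpaired element first. A crossing or a
block `{2i-1, 2i}` is visible on the pairing itself, so filtering the 10395 pairings of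
`[1, …, 12]` by these conditions leaves 15 candidates, and each of them is checked to be a
matching of the required kind.
-/
instance (b₁ b₂ : Finset ℕ) : Decidable (Crosses b₁ b₂) := by
  unfold Crosses; infer_instance

instance (m : Finset (Finset ℕ)) : Decidable (Noncrossing m) := by
  unfold Noncrossing; infer_instance

instance (n : ℕ) (m : Finset (Finset ℕ)) : Decidable (IsPerfectMatching n m) := by
  unfold IsPerfectMatching; infer_instance

lemma Finset.exists_ne_eq_pair_of_mem {α : Type*} [DecidableEq α] {b : Finset α} {x : α}
    (hb : b.card = 2) (hx : x ∈ b) : ∃ y, y ≠ x ∧ b = {x, y} := by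
  obtain ⟨y, hy⟩ := Finset.card_eq_one.mp
    (by rw [Finset.card_erase_of_mem hx, hb] : (b.erase x).card = 1)
  refine ⟨y, Finset.ne_of_mem_erase (hy ▸ Finset.mem_singleton_self y), ?_⟩
  rw [← hy, Finset.insert_erase hx]

section Pairings

variable {α : Type*} [DecidableEq α]

def pairings : ℕ → List α → List (List (α × α))
  | 0, _ => [[]]
  | _ + 1, [] => []
  | n + 1, x :: xs => xs.flatMap fun y => (pairings n (xs.erase y)).map ((x, y) :: ·)

def blocks (P : List (α × α)) : Finset (Finset α) :=
  (P.map fun p => ({p.1, p.2} : Finset α)).toFinset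

lemma mem_blocks {P : List (α × α)} {b : Finset α} : b ∈ blocks P ↔ ∃ p ∈ P, {p.1, p.2} = b := by
  simp [blocks]

lemma blocks_cons (x y : α) (P : List (α × α)) :
    blocks ((x, y) :: P) = insert {x, y} (blocks P) := by
  simp [blocks]

theorem exists_mem_pairings_blocks_eq {n : ℕ} {l : List α} (hl : l.Nodup)
    (hlen : l.length = 2 * n) {m : Finset (Finset α)} (hcard : ∀ b ∈ m, b.card = 2)
    (hdisj : ∀ b₁ ∈ m, ∀ b₂ ∈ m, b₁ ≠ b₂ → Disjoint b₁ b₂)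
    (hcover : ∀ z, z ∈ l ↔ ∃ b ∈ m, z ∈ b) :
    ∃ P ∈ pairings n l, blocks P = m := by
  induction n generalizing l m with
  | zero =>
    refine ⟨[], by simp [pairings], ?_⟩
    rw [List.length_eq_zero_iff.mp hlen] at hcover
    refine (Finset.eq_empty_of_forall_notMem fun b hb => ?_).symm
    obtain ⟨z, hz⟩ := Finset.card_pos.mp (by rw [hcard b hb]; norm_num)
    exact List.not_mem_nil ((hcover z).mpr ⟨b, hb, hz⟩)
  | succ n ih =>
    obtain ⟨x, xs, rfl⟩ := List.exists_cons_of_length_eq_add_one hlen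
    obtain ⟨hx, hxs⟩ := List.nodup_cons.mp hl
    obtain ⟨b, hb, hxb⟩ := (hcover x).mp List.mem_cons_self
    obtain ⟨y, hyx, rfl⟩ := Finset.exists_ne_eq_pair_of_mem (hcard _ hb) hxb
    have hy : y ∈ xs := by
      simpa [hyx] using (hcover y).mpr ⟨_, hb, by simp⟩
    have hcover' : ∀ z, z ∈ xs.erase y ↔ ∃ b ∈ m.erase {x, y}, z ∈ b := by
      intro z
      rw [hxs.mem_erase_iff]
      constructor
      · rintro ⟨hzy, hz⟩
        obtain ⟨b', hb', hzb'⟩ := (hcover z).mp (List.mem_cons_of_mem x hz)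
        refine ⟨b', Finset.mem_erase.mpr ⟨?_, hb'⟩, hzb'⟩
        rintro rfl
        simp only [Finset.mem_insert, Finset.mem_singleton] at hzb'
        exact hzb'.elim (fun h => hx (h ▸ hz)) hzy
      · rintro ⟨b', hb', hzb'⟩
        obtain ⟨hne, hb'm⟩ := Finset.mem_erase.mp hb'
        have hzxy : z ∉ ({x, y} : Finset α) :=
          Finset.disjoint_left.mp (hdisj _ hb'm _ hb hne) hzb'
        simp only [Finset.mem_insert, Finset.mem_singleton, not_or] at hzxy
        have hz := (hcover z).mpr ⟨b', hb'm, hzb'⟩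
        exact ⟨hzxy.2, (List.mem_cons.mp hz).resolve_left hzxy.1⟩
    obtain ⟨P, hP, hPm⟩ := ih (hxs.erase y)
      (by rw [List.length_erase_of_mem hy]; simp at hlen ⊢; omega)
      (fun b hb => hcard b (Finset.mem_of_mem_erase hb))
      (fun b₁ h₁ b₂ h₂ => hdisj b₁ (Finset.mem_of_mem_erase h₁) b₂ (Finset.mem_of_mem_erase h₂))
      hcover'
    refine ⟨(x, y) :: P, List.mem_flatMap.mpr ⟨y, hy, List.mem_map_of_mem hP⟩, ?_⟩
    rw [blocks_cons, hPm, Finset.insert_erase hb]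

end Pairings

theorem IsPerfectMatching.exists_mem_pairings {n : ℕ} {m : Finset (Finset ℕ)}
    (h : IsPerfectMatching n m) : ∃ P ∈ pairings n (List.range' 1 (2 * n)), blocks P = m := by
  obtain ⟨hcard, hsub, hdisj, hcover⟩ := h
  refine exists_mem_pairings_blocks_eq List.nodup_range' (List.length_range' ..) hcard hdisj
    fun z => ?_
  have hIcc : z ∈ List.range' 1 (2 * n) ↔ z ∈ Finset.Icc 1 (2 * n) := by
    simp only [List.mem_range'_1, Finset.mem_Icc]; omega
  exact hIcc.trans ⟨hcover z, fun ⟨b, hb, hzb⟩ => hsub b hb hzb⟩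

/-- The conditions `Noncrossing` and "no block `{2i-1, 2i}`" read on a pairing rather than on its
blocks, where the kernel evaluates them far faster. -/
def IsAdmissiblePairing (N : ℕ) (P : List (ℕ × ℕ)) : Prop :=
  (∀ p ∈ P, ∀ q ∈ P, ¬ (p.1 < q.1 ∧ q.1 < p.2 ∧ p.2 < q.2)) ∧
    ∀ i ∈ Finset.Icc 1 N, (2 * i - 1, 2 * i) ∉ P

instance (N : ℕ) : DecidablePred (IsAdmissiblePairing N) := fun _ => by
  unfold IsAdmissiblePairing; infer_instance

lemma isAdmissiblePairing_of_blocks {N : ℕ} {P : List (ℕ × ℕ)} (hnc : Noncrossing (blocks P))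
    (havoid : ∀ i ∈ Finset.Icc 1 N, ({2 * i - 1, 2 * i} : Finset ℕ) ∉ blocks P) :
    IsAdmissiblePairing N P := by
  refine ⟨fun p hp q hq hpq => ?_, fun i hi hP => havoid i hi (mem_blocks.mpr ⟨_, hP, rfl⟩)⟩
  exact hnc _ (mem_blocks.mpr ⟨p, hp, rfl⟩) _ (mem_blocks.mpr ⟨q, hq, rfl⟩)
    ⟨p.1, by simp, p.2, by simp, q.1, by simp, q.2, by simp, hpq⟩

lemma card_filter_blocks_admissiblePairings :
    ((((pairings 6 (List.range' 1 12)).filter (IsAdmissiblePairing 6 ·)).map blocks).toFinset.filter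
      fun m => IsPerfectMatching 6 m ∧ Noncrossing m ∧
        ∀ i ∈ Finset.Icc 1 6, ({2 * i - 1, 2 * i} : Finset ℕ) ∉ m).card = 15 := by
  decide +kernel

/-- Exactly 15 noncrossing perfect matchings of `{1,…,12}` contain no block of
the form `{2i−1, 2i}` for `i ∈ {1,…,6}`. -/
theorem card_noncrossing_matchings_without_adjacent_odd_even_blocks :
    {m : Finset (Finset ℕ) | IsPerfectMatching 6 m ∧ Noncrossing m ∧
      ∀ i ∈ Finset.Icc 1 6, ({2 * i - 1, 2 * i} : Finset ℕ) ∉ m}.ncard = 15 := by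
  rw [← card_filter_blocks_admissiblePairings, ← Set.ncard_coe_finset, Finset.coe_filter]
  congr 1
  ext m
  simp only [Set.mem_ofPred_eq, List.mem_toFinset, List.mem_map, List.mem_filter]
  refine ⟨fun hm => ⟨?_, hm⟩, And.right⟩
  obtain ⟨P, hP, rfl⟩ := hm.1.exists_mem_pairings
  exact ⟨P, ⟨hP, decide_eq_true (isAdmissiblePairing_of_blocks hm.2.1 hm.2.2)⟩, rfl⟩
end
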